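/- There is no uniformly consistent test for any hypothesis H_0 ⊆ E against its complement H_1 = E ∖ H_0 unless one of these hypotheses is empty: if H_0 and E ∖ H_0 are both nonempty measurable subsets of the set E of stationary ergodic process distributions over a finite alphabet, then no uniformly consistent test for H_0 against E ∖ H_0 exists. -/

import Mathlib

open MeasureTheory Filter Topology

namespace Paper

variable {A : Type*} [Fintype A] [MeasurableSpace A]

/-- The left shift on one-sided infinite sequences. -/
def shift (x : ℕ → A) : ℕ → A := fun n => x (n + 1)

/-- A process distribution is stationary if it is invariant under the left shift. -/
def Stationary (ρ : Measure (ℕ → A)) : Prop := Measure.map shift ρ = ρ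

/-- The cylinder set of sequences starting with the word `B ∈ A^k`. -/
def wordCyl {k : ℕ} (B : Fin k → A) : Set (ℕ → A) := {x | ∀ i : Fin k, x i = B i}

open Classical in
/-- Empirical frequency `ν(X_{1..n}, B)` of the word `B ∈ A^k` in the first `n` symbols
of `x` (0 when `n < k`). -/
noncomputable def freqWord {k : ℕ} (B : Fin k → A) (n : ℕ) (x : ℕ → A) : ℝ :=
  if k ≤ n then
    (∑ i ∈ Finset.range (n - k + 1), if (∀ j : Fin k, x (i + j) = B j) then (1 : ℝ) else 0) /
      ((n : ℝ) - k + 1)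
  else 0

/-- Ergodicity: the empirical frequency of every finite word converges a.s. to a constant. -/
def ErgodicProc (ρ : Measure (ℕ → A)) : Prop :=
  ∀ (k : ℕ) (B : Fin k → A),
    ∃ c : ℝ, ∀ᵐ x ∂ρ, Tendsto (fun n => freqWord B n x) atTop (𝓝 c)

/-- A stationary ergodic process distribution. -/
def StatErg (ρ : Measure (ℕ → A)) : Prop :=
  IsProbabilityMeasure ρ ∧ Stationary ρ ∧ ErgodicProc ρ

/-- The set `E` of stationary ergodic process distributions over the alphabet `A`. -/
def ergSet (A : Type*) [Fintype A] [MeasurableSpace A] : Set (Measure (ℕ → A)) :=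
  {ρ | StatErg ρ}

/-- Weights `w_k = 1/(k(k+1))` (indexing from 0: `w_k = 1/((k+1)(k+2))`). -/
noncomputable def wt (k : ℕ) : ℝ := 1 / ((k + 1) * (k + 2))

/-- The distributional distance `d(ρ₁,ρ₂) = Σ_k w_k Σ_{B ∈ A^k} |ρ₁(B) − ρ₂(B)|`. -/
noncomputable def dd (ρ₁ ρ₂ : Measure (ℕ → A)) : ℝ :=
  ∑' k : ℕ, wt k * ∑ B : Fin (k + 1) → A,
    |(ρ₁ (wordCyl B)).toReal - (ρ₂ (wordCyl B)).toReal|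

/-- The empirical distributional distance `d̂(X_{1..n}, ρ)`. -/
noncomputable def hatd (n : ℕ) (x : ℕ → A) (ρ : Measure (ℕ → A)) : ℝ :=
  ∑' k : ℕ, wt k * ∑ B : Fin (k + 1) → A,
    |freqWord B n x - (ρ (wordCyl B)).toReal|

/-- The empirical distributional distance from a sample to a hypothesis (set of
process distributions): `d̂(X_{1..n}, H) = inf_{ρ ∈ H} d̂(X_{1..n}, ρ)`. -/
noncomputable def hatdSet (n : ℕ) (x : ℕ → A) (H : Set (Measure (ℕ → A))) : ℝ :=
  ⨅ ρ : H, hatd n x (ρ : Measure (ℕ → A))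

/-- Closure of a set of (stationary) process distributions in the topology of the
distributional distance, taken within the space `S` of stationary process distributions. -/
def closureD (H : Set (Measure (ℕ → A))) : Set (Measure (ℕ → A)) :=
  {ρ | IsProbabilityMeasure ρ ∧ Stationary ρ ∧ ∀ ε : ℝ, 0 < ε → ∃ μ ∈ H, dd ρ μ < ε}

/-- `W` is the ergodic decomposition of the stationary process distribution `ρ`:
a Borel probability measure on the space of process distributions concentrated on the
stationary ergodic ones, with `ρ(s) = ∫ μ(s) dW(μ)` for every measurable `s`. -/
def IsErgodicDecomp (ρ : Measure (ℕ → A)) (W : Measure (Measure (ℕ → A))) : Prop :=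
  IsProbabilityMeasure W ∧ W (ergSet A) = 1 ∧
    ∀ s : Set (ℕ → A), MeasurableSet s → ρ s = ∫⁻ μ, μ s ∂W

/-- A test depends, at sample size `n`, only on the first `n` symbols. -/
def FinHorizon (φ : ℕ → (ℕ → A) → Bool) : Prop :=
  ∀ n x y, (∀ i < n, x i = y i) → φ n x = φ n y

/-- Uniform consistency of a test (`false` = accept `H₀`, `true` = accept `H₁`):
for every `α > 0`, for all large enough sample sizes, both probabilities of error are
less than `α`. -/
def UnifConsistent (φ : ℕ → (ℕ → A) → Bool) (H₀ H₁ : Set (Measure (ℕ → A))) : Prop :=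
  ∀ α : ℝ, 0 < α → ∃ N : ℕ, ∀ n ≥ N,
    (∀ ρ ∈ H₀, ρ {x | φ n x = true} < ENNReal.ofReal α) ∧
    (∀ ρ ∈ H₁, ρ {x | φ n x = false} < ENNReal.ofReal α)

/-- Asymmetric (`α`-level) consistency of a family of tests `ψ α`: Type I error is always
at most `α`, and under every distribution in `H₁`, a.s. the test outputs `1` from some
sample size on. -/
def AsymConsistent (ψ : ℝ → ℕ → (ℕ → A) → Bool) (H₀ H₁ : Set (Measure (ℕ → A))) : Prop :=
  (∀ α : ℝ, α ∈ Set.Ioo (0 : ℝ) 1 → ∀ n : ℕ, ∀ ρ ∈ H₀,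
    ρ {x | ψ α n x = true} ≤ ENNReal.ofReal α) ∧
  (∀ α : ℝ, α ∈ Set.Ioo (0 : ℝ) 1 → ∀ ρ ∈ H₁,
    ∀ᵐ x ∂ρ, ∀ᶠ n in atTop, ψ α n x = true)

section Aux

open Finset
open scoped ENNReal NNReal

set_option linter.unusedSectionVars false

/-- Shift by `s` steps: `shifted s x t = x (s + t)`. -/
def shifted (s : ℕ) (x : ℕ → A) : ℕ → A := fun t => x (s + t)

lemma shifted_zero (x : ℕ → A) : shifted 0 x = x := funext fun t => by simp [shifted]

lemma shift_shifted (s : ℕ) (x : ℕ → A) : shift (shifted s x) = shifted (s + 1) x := by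
  funext t
  show x (s + (t + 1)) = x (s + 1 + t)
  congr 1
  omega

lemma measurable_shift : Measurable (shift : (ℕ → A) → (ℕ → A)) :=
  measurable_pi_lambda _ fun t => measurable_pi_apply (t + 1)

lemma measurable_shifted (s : ℕ) : Measurable (shifted s : (ℕ → A) → (ℕ → A)) :=
  measurable_pi_lambda _ fun t => measurable_pi_apply (s + t)

lemma map_shifted {ρ : Measure (ℕ → A)} (h : Stationary ρ) (s : ℕ) :
    Measure.map (shifted s) ρ = ρ := by
  induction s with
  | zero =>
    rw [show (shifted 0 : (ℕ → A) → (ℕ → A)) = id from funext fun x => shifted_zero x]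
    exact Measure.map_id
  | succ s ih =>
    have hcomp : (shifted (s + 1) : (ℕ → A) → (ℕ → A)) = shift ∘ shifted s :=
      funext fun x => (shift_shifted s x).symm
    rw [hcomp, ← Measure.map_map measurable_shift (measurable_shifted s), ih]
    exact h

/-- The measurable atom of a point in the (finite) alphabet. -/
def atomOf (a : A) : Set A := {b | ∀ S : Set A, MeasurableSet S → a ∈ S → b ∈ S}

lemma self_mem_atomOf (a : A) : a ∈ atomOf a := fun _ _ h => h

lemma atomOf_symm {a b : A} (h : b ∈ atomOf a) : a ∈ atomOf b := by
  intro S hS hb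
  by_contra ha
  exact h Sᶜ hS.compl ha hb

lemma measurableSet_atomOf (a : A) : MeasurableSet (atomOf a) := by
  have hA : atomOf a = ⋂₀ {S : Set A | MeasurableSet S ∧ a ∈ S} := by
    ext b
    constructor
    · intro h S hS
      exact h S hS.1 hS.2
    · intro h S hS haS
      exact h S ⟨hS, haS⟩
  rw [hA]
  exact MeasurableSet.sInter (Set.to_countable _) fun S hS => hS.1

/-- A point of the alphabet whose measurable atom is a singleton. -/
def SingAtom (a : A) : Prop := atomOf a ⊆ {a}

/-- Measurable sets of sequences are saturated under the coordinatewise atom relation. -/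
lemma measurable_saturated {s : Set (ℕ → A)} (hs : MeasurableSet s)
    {x y : ℕ → A} (hxy : ∀ i, y i ∈ atomOf (x i)) (hx : x ∈ s) : y ∈ s := by
  let m' : MeasurableSpace (ℕ → A) :=
    { MeasurableSet' := fun t =>
        ∀ u v : ℕ → A, (∀ i, v i ∈ atomOf (u i)) → u ∈ t → v ∈ t
      measurableSet_empty := fun _ _ _ h => h.elim
      measurableSet_compl := by
        intro t ht u v huv hu hv
        exact hu (ht v u (fun i => atomOf_symm (huv i)) hv)
      measurableSet_iUnion := by
        intro f hf u v huv hu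
        obtain ⟨i, hi⟩ := Set.mem_iUnion.1 hu
        exact Set.mem_iUnion.2 ⟨i, hf i u v huv hi⟩ }
  have hle : (MeasurableSpace.pi : MeasurableSpace (ℕ → A)) ≤ m' := by
    apply iSup_le
    intro i
    rintro t ⟨S, hS, rfl⟩
    intro u v huv hu
    exact huv i S hS hu
  have hs' : MeasurableSet[MeasurableSpace.pi] s := hs
  exact hle s hs' x y hxy hx

lemma measurableSet_singleton_of_sing {y : ℕ → A} (h : ∀ t, SingAtom (y t)) :
    MeasurableSet ({y} : Set (ℕ → A)) := by
  have hset : ({y} : Set (ℕ → A)) = ⋂ t, (fun x : ℕ → A => x t) ⁻¹' atomOf (y t) := by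
    ext x
    simp only [Set.mem_singleton_iff, Set.mem_iInter, Set.mem_preimage]
    constructor
    · rintro rfl t
      exact self_mem_atomOf _
    · intro hx
      funext t
      exact h t (hx t)
  rw [hset]
  exact MeasurableSet.iInter fun t => measurable_pi_apply t (measurableSet_atomOf _)

lemma sum_range_rotate {v : ℕ → ℝ} {p : ℕ} (h : v p = v 0) :
    ∑ r ∈ range p, v (r + 1) = ∑ r ∈ range p, v r := by
  have h1 := Finset.sum_range_succ' v p
  have h2 := Finset.sum_range_succ v p
  rw [h1] at h2
  linarith [h2, h]

lemma sum_range_rotate_ennreal {v : ℕ → ℝ≥0∞} {p : ℕ} (h : v p = v 0) (hfin : v 0 ≠ ⊤) :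
    ∑ r ∈ range p, v (r + 1) = ∑ r ∈ range p, v r := by
  have h1 := Finset.sum_range_succ' v p
  have h2 := Finset.sum_range_succ v p
  rw [h1, h] at h2
  exact WithTop.add_right_cancel hfin h2

lemma periodic_sum_shift {u : ℕ → ℝ} {p : ℕ} (hu : ∀ t, u (t + p) = u t) (s : ℕ) :
    ∑ r ∈ range p, u (s + r) = ∑ r ∈ range p, u r := by
  induction s with
  | zero => simp
  | succ s ih =>
    calc ∑ r ∈ range p, u (s + 1 + r)
        = ∑ r ∈ range p, u (s + (r + 1)) :=
          Finset.sum_congr rfl (fun r _ => by congr 1; omega)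
      _ = ∑ r ∈ range p, u (s + r) :=
          sum_range_rotate (v := fun r => u (s + r)) (by simpa using hu s)
      _ = ∑ r ∈ range p, u r := ih

lemma sum_range_mul_periodic {u : ℕ → ℝ} {p : ℕ} (hu : ∀ t, u (t + p) = u t) (q : ℕ) :
    ∑ r ∈ range (q * p), u r = q * ∑ r ∈ range p, u r := by
  induction q with
  | zero => simp
  | succ q ih =>
    have hq : (q + 1) * p = q * p + p := by ring
    rw [hq, Finset.sum_range_add, ih, periodic_sum_shift hu (q * p)]
    push_cast
    ring

/-- Real-valued indicator of a Boolean test. -/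
noncomputable def fI (g : (ℕ → A) → Bool) (x : ℕ → A) : ℝ := if g x = true then 1 else 0

lemma fI_nonneg (g : (ℕ → A) → Bool) (x : ℕ → A) : 0 ≤ fI g x := by
  unfold fI; split <;> norm_num

lemma fI_le_one (g : (ℕ → A) → Bool) (x : ℕ → A) : fI g x ≤ 1 := by
  unfold fI; split <;> norm_num

lemma fI_eq_indicator (g : (ℕ → A) → Bool) :
    fI g = Set.indicator {x | g x = true} (fun _ => (1 : ℝ)) := by
  funext x
  by_cases h : g x = true <;> simp [fI, h, Set.indicator_apply, Set.mem_setOf_eq]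

lemma measurable_fI {g : (ℕ → A) → Bool} (hg : Measurable g) : Measurable (fI g) := by
  rw [fI_eq_indicator]
  exact (measurable_const).indicator (hg (MeasurableSet.singleton true))

/-- Extension of a finite word to an infinite sequence. -/
noncomputable def extWord [Nonempty A] {n : ℕ} (B : Fin n → A) : ℕ → A :=
  fun t => if h : t < n then B ⟨t, h⟩ else Classical.arbitrary A

/-- The accepted words of length `n`. -/
noncomputable def acceptSet [Nonempty A] (g : (ℕ → A) → Bool) (n : ℕ) : Finset (Fin n → A) :=
  Finset.univ.filter fun B : Fin n → A => g (extWord B) = true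

open Classical in
/-- Key pointwise identity: the sum over accepted words of empirical frequencies equals the
window-average of the test indicator. -/
lemma sum_freq_eq [Nonempty A] (g : (ℕ → A) → Bool) (n : ℕ)
    (hgfin : ∀ x y : ℕ → A, (∀ i < n, x i = y i) → g x = g y)
    (x : ℕ → A) (M : ℕ) (hM : n ≤ M) :
    ∑ B ∈ acceptSet g n, freqWord B M x
      = (∑ i ∈ range (M - n + 1), fI g (shifted i x)) / ((M : ℝ) - n + 1) := by
  have hfreq : ∀ B : Fin n → A, freqWord B M x =
      (∑ i ∈ Finset.range (M - n + 1),
        if (∀ j : Fin n, x (i + j) = B j) then (1 : ℝ) else 0) / ((M : ℝ) - n + 1) := by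
    intro B
    rw [freqWord, if_pos hM]
  calc ∑ B ∈ acceptSet g n, freqWord B M x
      = (∑ B ∈ acceptSet g n, ∑ i ∈ Finset.range (M - n + 1),
          if (∀ j : Fin n, x (i + j) = B j) then (1 : ℝ) else 0) / ((M : ℝ) - n + 1) := by
        rw [Finset.sum_div]
        exact Finset.sum_congr rfl fun B _ => hfreq B
    _ = (∑ i ∈ Finset.range (M - n + 1), ∑ B ∈ acceptSet g n,
          if (∀ j : Fin n, x (i + j) = B j) then (1 : ℝ) else 0) / ((M : ℝ) - n + 1) := by
        rw [Finset.sum_comm]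
    _ = (∑ i ∈ range (M - n + 1), fI g (shifted i x)) / ((M : ℝ) - n + 1) := by
        congr 1
        apply Finset.sum_congr rfl
        intro i _
        set B₀ : Fin n → A := fun j => x (i + j) with hB₀
        have hiff : ∀ B : Fin n → A, (∀ j : Fin n, x (i + j) = B j) ↔ B = B₀ := by
          intro B
          constructor
          · intro h
            funext j
            exact (h j).symm
          · rintro rfl j
            rfl
        have hstep : ∀ B : Fin n → A,
            (if (∀ j : Fin n, x (i + j) = B j) then (1 : ℝ) else 0)
              = if B = B₀ then (1 : ℝ) else 0 := fun B => if_congr (hiff B) rfl rfl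
        rw [Finset.sum_congr rfl fun B _ => hstep B, Finset.sum_ite_eq' (acceptSet g n) B₀ fun _ => (1 : ℝ)]
        have hmem : B₀ ∈ acceptSet g n ↔ g (extWord B₀) = true := by
          simp [acceptSet]
        have hagree : g (extWord B₀) = g (shifted i x) := by
          apply hgfin
          intro t ht
          simp only [extWord, shifted, dif_pos ht]
          rfl
        rw [fI]
        rw [← hagree]
        by_cases hb : g (extWord B₀) = true
        · rw [if_pos (hmem.2 hb), if_pos hb]
        · rw [if_neg (fun hh => hb (hmem.1 hh)), if_neg hb]

/-- Under a stationary ergodic process, the window-averages of a finite-horizon test converge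
a.s. to the probability of acceptance. -/
lemma key_convergence [Nonempty A] {ρ : Measure (ℕ → A)} (hρ : StatErg ρ)
    (g : (ℕ → A) → Bool) (n : ℕ) (hn : 1 ≤ n) (hg : Measurable g)
    (hgfin : ∀ x y : ℕ → A, (∀ i < n, x i = y i) → g x = g y) :
    ∃ c : ℝ, c = (ρ {x | g x = true}).toReal ∧
      ∀ᵐ x ∂ρ, Tendsto (fun m => (∑ j ∈ range m, fI g (shifted j x)) / (m : ℝ))
        atTop (𝓝 c) := by
  obtain ⟨hprob, hstat, herg⟩ := hρ
  choose cB hcB using fun B : Fin n → A => herg n B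
  set c : ℝ := ∑ B ∈ acceptSet g n, cB B with hc
  have haeAll : ∀ᵐ x ∂ρ, ∀ B : Fin n → A,
      Tendsto (fun m => freqWord B m x) atTop (𝓝 (cB B)) := ae_all_iff.2 hcB
  -- a.s. convergence of the sums over accepted words
  have haeSum : ∀ᵐ x ∂ρ,
      Tendsto (fun M => ∑ B ∈ acceptSet g n, freqWord B M x) atTop (𝓝 c) := by
    filter_upwards [haeAll] with x hx
    exact tendsto_finset_sum _ fun B _ => hx B
  -- a.s. convergence of the window averages
  have haeAvg : ∀ᵐ x ∂ρ,
      Tendsto (fun m => (∑ j ∈ range m, fI g (shifted j x)) / (m : ℝ)) atTop (𝓝 c) := by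
    filter_upwards [haeSum] with x hx
    have hcomp : Tendsto (fun m : ℕ => m + n - 1) atTop atTop :=
      tendsto_atTop_atTop.2 fun b => ⟨b, fun a ha => by omega⟩
    have h2 : Tendsto (fun m => ∑ B ∈ acceptSet g n, freqWord B (m + n - 1) x)
        atTop (𝓝 c) := hx.comp hcomp
    apply h2.congr'
    filter_upwards [eventually_ge_atTop 1] with m hm
    rw [sum_freq_eq g n hgfin x (m + n - 1) (by omega)]
    have h3 : m + n - 1 - n + 1 = m := by omega
    have h4 : ((m + n - 1 : ℕ) : ℝ) - n + 1 = m := by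
      have : (m + n - 1 : ℕ) = m + n - 1 := rfl
      rw [Nat.cast_sub (by omega)]
      push_cast
      ring
    rw [h3, h4]
  -- identification of the limit via dominated convergence
  have hscyl : MeasurableSet {x : ℕ → A | g x = true} := hg (MeasurableSet.singleton true)
  have hint : ∀ m : ℕ, 1 ≤ m →
      ∫ x, (∑ j ∈ range m, fI g (shifted j x)) / (m : ℝ) ∂ρ
        = (ρ {x | g x = true}).toReal := by
    intro m hm
    have hint1 : ∀ j : ℕ, ∫ x, fI g (shifted j x) ∂ρ = (ρ {x | g x = true}).toReal := by
      intro j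
      have heq : (fun x => fI g (shifted j x))
          = Set.indicator ((shifted j) ⁻¹' {x | g x = true}) (1 : (ℕ → A) → ℝ) := by
        funext x
        by_cases h : g (shifted j x) = true <;>
          simp [fI, h, Set.indicator_apply, Set.mem_preimage, Set.mem_setOf_eq]
      rw [heq, integral_indicator_one (measurable_shifted j hscyl)]
      rw [measureReal_def]
      congr 1
      rw [← Measure.map_apply (measurable_shifted j) hscyl, map_shifted hstat j]
    have hintg : ∀ j : ℕ, Integrable (fun x => fI g (shifted j x)) ρ := by
      intro j
      have heq : (fun x => fI g (shifted j x))
          = Set.indicator ((shifted j) ⁻¹' {x | g x = true}) (1 : (ℕ → A) → ℝ) := by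
        funext x
        by_cases h : g (shifted j x) = true <;>
          simp [fI, h, Set.indicator_apply, Set.mem_preimage, Set.mem_setOf_eq]
      rw [heq]
      exact (integrable_const 1).indicator (measurable_shifted j hscyl)
    rw [integral_div, integral_finset_sum _ fun j _ => hintg j]
    rw [Finset.sum_congr rfl fun j _ => hint1 j]
    rw [Finset.sum_const, card_range, nsmul_eq_mul]
    field_simp
  -- dominated convergence for the sequence (m+1)
  have hDCT : Tendsto
      (fun k => ∫ x, (∑ j ∈ range (k + 1), fI g (shifted j x)) / ((k + 1 : ℕ) : ℝ) ∂ρ)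
      atTop (𝓝 (∫ _x, c ∂ρ)) := by
    apply tendsto_integral_of_dominated_convergence (bound := fun _ => (1 : ℝ))
    · intro k
      apply Measurable.aestronglyMeasurable
      apply Measurable.div_const
      exact Finset.measurable_sum _ fun j _ => (measurable_fI hg).comp (measurable_shifted j)
    · exact integrable_const 1
    · intro k
      apply ae_of_all
      intro x
      have h1 : 0 ≤ ∑ j ∈ range (k + 1), fI g (shifted j x) :=
        Finset.sum_nonneg fun j _ => fI_nonneg g _
      have h2 : ∑ j ∈ range (k + 1), fI g (shifted j x) ≤ (k + 1 : ℝ) := by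
        calc ∑ j ∈ range (k + 1), fI g (shifted j x)
            ≤ ∑ _j ∈ range (k + 1), (1 : ℝ) :=
              Finset.sum_le_sum fun j _ => fI_le_one g _
          _ = (k + 1 : ℝ) := by simp
      rw [Real.norm_eq_abs, abs_of_nonneg (by positivity)]
      rw [div_le_one (by positivity)]
      push_cast
      exact h2
    · filter_upwards [haeAvg] with x hx
      have hcomp : Tendsto (fun k : ℕ => k + 1) atTop atTop :=
        tendsto_atTop_atTop.2 fun b => ⟨b, fun a ha => by omega⟩
      have := hx.comp hcomp
      apply this.congr
      intro k
      simp
  have hconst : Tendsto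
      (fun k => ∫ x, (∑ j ∈ range (k + 1), fI g (shifted j x)) / ((k + 1 : ℕ) : ℝ) ∂ρ)
      atTop (𝓝 ((ρ {x | g x = true}).toReal)) := by
    have : ∀ k : ℕ, ∫ x, (∑ j ∈ range (k + 1), fI g (shifted j x)) / ((k + 1 : ℕ) : ℝ) ∂ρ
        = (ρ {x | g x = true}).toReal := fun k => hint (k + 1) (by omega)
    simp only [this]
    exact tendsto_const_nhds
  have hceq : c = (ρ {x | g x = true}).toReal := by
    have h5 : ∫ _x, c ∂ρ = c := by simp
    rw [h5] at hDCT
    exact tendsto_nhds_unique hDCT hconst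
  exact ⟨c, hceq, haeAvg⟩

lemma atomOf_trans {a b c : A} (hb : b ∈ atomOf a) (hc : c ∈ atomOf b) : c ∈ atomOf a :=
  fun S hS haS => hc S hS (hb S hS haS)

open Classical in
/-- Under any stationary ergodic process, a.s. the density of positions whose symbol has a
non-singleton measurable atom tends to `0`. -/
lemma blob_density {ρ : Measure (ℕ → A)} (hρ : StatErg ρ) :
    ∀ᵐ x ∂ρ, Tendsto
      (fun m => (∑ j ∈ range m, if SingAtom (x j) then (0 : ℝ) else 1) / (m : ℝ))
      atTop (𝓝 0) := by
  obtain ⟨hprob, hstat, herg⟩ := hρ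
  choose ca hca using fun a : A => herg 1 (fun _ => a)
  have haeAll : ∀ᵐ x ∂ρ, ∀ a : A,
      Tendsto (fun m => freqWord (fun _ : Fin 1 => a) m x) atTop (𝓝 (ca a)) :=
    ae_all_iff.2 hca
  obtain ⟨T, hTsub, hTmeas, hT0⟩ := exists_measurable_superset_of_null (ae_iff.1 haeAll)
  -- every point outside `T` satisfies the convergence property
  have hW : ∀ y : ℕ → A, y ∉ T → ∀ a : A,
      Tendsto (fun m => freqWord (fun _ : Fin 1 => a) m y) atTop (𝓝 (ca a)) := by
    intro y hy
    by_contra hcon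
    exact hy (hTsub hcon)
  -- rewrite letter frequencies as plain counts
  have hfreq1 : ∀ (y : ℕ → A) (a : A) (m : ℕ), 1 ≤ m →
      freqWord (fun _ : Fin 1 => a) m y
        = (∑ i ∈ range m, if y i = a then (1 : ℝ) else 0) / (m : ℝ) := by
    intro y a m hm
    rw [freqWord, if_pos hm]
    have h1 : m - 1 + 1 = m := by omega
    have h2 : (m : ℝ) - ((1 : ℕ) : ℝ) + 1 = (m : ℝ) := by push_cast; ring
    rw [h1, h2]
    congr 1
    apply Finset.sum_congr rfl
    intro i _
    apply if_congr _ rfl rfl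
    constructor
    · intro h
      simpa using h 0
    · intro h j
      have : j = 0 := Fin.fin_one_eq_zero j
      subst this
      simpa using h
  -- main claim for points outside T
  apply ae_iff.2
  apply measure_mono_null _ hT0
  intro x hx
  simp only [Set.mem_setOf_eq] at hx
  by_contra hxT
  apply hx
  -- x ∉ T; show the density statement
  have hatomdens : ∀ a : A, ¬ SingAtom a →
      Tendsto (fun m => (∑ j ∈ range m, if x j ∈ atomOf a then (1 : ℝ) else 0) / (m : ℝ))
        atTop (𝓝 0) := by
    intro a ha
    obtain ⟨a', ha'mem, ha'ne⟩ := Set.not_subset.1 ha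
    have ha'ne : a' ≠ a := fun h => ha'ne (h ▸ rfl)
    set y₁ : ℕ → A := fun j => if x j ∈ atomOf a then a else x j with hy₁def
    set y₂ : ℕ → A := fun j => if x j ∈ atomOf a then a' else x j with hy₂def
    have hy₁rel : ∀ i, y₁ i ∈ atomOf (x i) := by
      intro i
      by_cases h : x i ∈ atomOf a
      · simp only [hy₁def, if_pos h]
        exact atomOf_symm h
      · simp only [hy₁def, if_neg h]
        exact self_mem_atomOf _
    have hy₂rel : ∀ i, y₂ i ∈ atomOf (x i) := by
      intro i
      by_cases h : x i ∈ atomOf a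
      · simp only [hy₂def, if_pos h]
        exact atomOf_trans (atomOf_symm h) (atomOf_symm (atomOf_symm ha'mem))
      · simp only [hy₂def, if_neg h]
        exact self_mem_atomOf _
    have hy₁T : y₁ ∉ T := measurable_saturated hTmeas.compl hy₁rel hxT
    have hy₂T : y₂ ∉ T := measurable_saturated hTmeas.compl hy₂rel hxT
    have h1 : Tendsto
        (fun m => (∑ j ∈ range m, if x j ∈ atomOf a then (1 : ℝ) else 0) / (m : ℝ))
        atTop (𝓝 (ca a)) := by
      apply (hW y₁ hy₁T a).congr'
      filter_upwards [eventually_ge_atTop 1] with m hm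
      rw [hfreq1 y₁ a m hm]
      congr 1
      apply Finset.sum_congr rfl
      intro i _
      apply if_congr _ rfl rfl
      constructor
      · intro h
        by_cases hmem : x i ∈ atomOf a
        · exact hmem
        · exfalso
          simp only [hy₁def, if_neg hmem] at h
          exact hmem (h ▸ self_mem_atomOf a)
      · intro h
        simp only [hy₁def, if_pos h]
    have h2 : ca a = 0 := by
      have hzero : (fun m => freqWord (fun _ : Fin 1 => a) m y₂) =ᶠ[atTop]
          (fun _ => (0 : ℝ)) := by
        filter_upwards [eventually_ge_atTop 1] with m hm
        rw [hfreq1 y₂ a m hm]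
        have hterm : ∀ i, (if y₂ i = a then (1 : ℝ) else 0) = 0 := by
          intro i
          rw [if_neg]
          intro h
          by_cases hmem : x i ∈ atomOf a
          · simp only [hy₂def, if_pos hmem] at h
            exact ha'ne h
          · simp only [hy₂def, if_neg hmem] at h
            exact hmem (h ▸ self_mem_atomOf a)
        rw [Finset.sum_congr rfl fun i _ => hterm i]
        simp
      have := ((hW y₂ hy₂T a).congr' hzero : Tendsto (fun _ : ℕ => (0 : ℝ)) atTop (𝓝 (ca a)))
      exact tendsto_nhds_unique this tendsto_const_nhds
    rw [h2] at h1
    exact h1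
  -- squeeze against the sum over non-singleton atoms
  set badF : Finset A := Finset.univ.filter (fun a => ¬ SingAtom a) with hbadF
  have hnonneg : ∀ m : ℕ,
      0 ≤ (∑ j ∈ range m, if SingAtom (x j) then (0 : ℝ) else 1) / (m : ℝ) := by
    intro m
    apply div_nonneg _ (by positivity)
    apply Finset.sum_nonneg
    intro j _
    split <;> norm_num
  have hbound : ∀ m : ℕ,
      (∑ j ∈ range m, if SingAtom (x j) then (0 : ℝ) else 1) / (m : ℝ)
        ≤ ∑ a ∈ badF, (∑ j ∈ range m, if x j ∈ atomOf a then (1 : ℝ) else 0) / (m : ℝ) := by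
    intro m
    rw [← Finset.sum_div]
    gcongr
    rw [Finset.sum_comm]
    apply Finset.sum_le_sum
    intro j _
    by_cases hs : SingAtom (x j)
    · rw [if_pos hs]
      apply Finset.sum_nonneg
      intro a _
      split <;> norm_num
    · rw [if_neg hs]
      have hmemb : x j ∈ badF := by
        simp [hbadF, hs]
      have := Finset.single_le_sum
        (f := fun a => if x j ∈ atomOf a then (1 : ℝ) else 0)
        (fun a _ => by split <;> norm_num) hmemb
      simpa [self_mem_atomOf (x j)] using this
  have hg0 : Tendsto
      (fun m => ∑ a ∈ badF, (∑ j ∈ range m, if x j ∈ atomOf a then (1 : ℝ) else 0) / (m : ℝ))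
      atTop (𝓝 0) := by
    have := tendsto_finset_sum badF (f := fun a m =>
        (∑ j ∈ range m, if x j ∈ atomOf a then (1 : ℝ) else 0) / (m : ℝ))
        (a := fun _ => (0 : ℝ))
        (fun a ha => hatomdens a (by simpa [hbadF] using ha))
    simpa using this
  exact squeeze_zero hnonneg hbound hg0

lemma sum_range_mul_split (u : ℕ → ℝ) (K M : ℕ) :
    ∑ j ∈ range (K * M), u j = ∑ t ∈ range K, ∑ i ∈ range M, u (t * M + i) := by
  induction K with
  | zero => simp
  | succ K ih =>
    have hKM : (K + 1) * M = K * M + M := by ring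
    rw [hKM, Finset.sum_range_add, ih, Finset.sum_range_succ]

omit [Fintype A] [MeasurableSpace A] in
/-- Window-selection: if the running averages of `h` converge to `c < 1/8` and the bad-position
density tends to `0`, then some aligned window of length `M = 8n` has small `h`-average and
no bad position. -/
lemma window_select {h σ : ℕ → ℝ} (h0 : ∀ j, 0 ≤ h j) (h1 : ∀ j, h j ≤ 1)
    (hσ0 : ∀ j, 0 ≤ σ j) {c : ℝ} (hc : c < 1 / 8)
    (hS : Tendsto (fun m => (∑ j ∈ range m, h j) / (m : ℝ)) atTop (𝓝 c))
    (hσ : Tendsto (fun m => (∑ j ∈ range m, σ j) / (m : ℝ)) atTop (𝓝 0))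
    {n M : ℕ} (hn : 1 ≤ n) (hM : M = 8 * n) :
    ∃ T : ℕ, (∑ i ∈ range (M - n + 1), h (T + i)) ≤ ((M - n + 1 : ℕ) : ℝ) / 4 ∧
      (∑ i ∈ range M, σ (T + i)) < 1 := by
  have hMn : M - n + 1 = 7 * n + 1 := by omega
  have hMpos : 0 < M := by omega
  have hMr : (0 : ℝ) < (M : ℝ) := by exact_mod_cast hMpos
  have hev1 : ∀ᶠ m : ℕ in atTop, (∑ j ∈ range m, h j) / (m : ℝ) < 1 / 8 :=
    hS.eventually_lt_const hc
  have hev2 : ∀ᶠ m : ℕ in atTop, (∑ j ∈ range m, σ j) / (m : ℝ) < 1 / (8 * M) :=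
    hσ.eventually_lt_const (by positivity)
  obtain ⟨m₀, hm₀⟩ := (hev1.and hev2).exists_forall_of_atTop
  obtain ⟨K, hKdef⟩ : ∃ K : ℕ, K = m₀ + 1 := ⟨m₀ + 1, rfl⟩
  have hKpos : (0 : ℝ) < (K : ℝ) := by
    have : 0 < K := by omega
    exact_mod_cast this
  obtain ⟨hA, hB⟩ := hm₀ (K * M) (by
    calc m₀ ≤ K := by omega
    _ ≤ K * M := Nat.le_mul_of_pos_right K hMpos)
  have hKM : (0 : ℝ) < ((K * M : ℕ) : ℝ) := by
    have : 0 < K * M := Nat.mul_pos (by omega) hMpos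
    exact_mod_cast this
  have hKMr : ((K * M : ℕ) : ℝ) = (K : ℝ) * (M : ℝ) := by push_cast; ring
  have hhsum : ∑ j ∈ range (K * M), h j ≤ (K : ℝ) * (M : ℝ) / 8 := by
    have h2 := (div_lt_iff₀ hKM).1 hA
    rw [hKMr] at h2
    linarith
  have hσsum : ∑ j ∈ range (K * M), σ j ≤ (K : ℝ) / 8 := by
    have h2 := (div_lt_iff₀ hKM).1 hB
    rw [hKMr] at h2
    have h3 : (1 : ℝ) / (8 * (M : ℝ)) * ((K : ℝ) * (M : ℝ)) = (K : ℝ) / 8 := by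
      field_simp
    rw [h3] at h2
    linarith
  by_contra hcon
  push_neg at hcon
  set θ : ℝ := ((M - n + 1 : ℕ) : ℝ) / 4 with hθ
  have hθpos : 0 < θ := by
    rw [hθ, hMn]
    positivity
  have hper : ∀ t : ℕ, (1 : ℝ) ≤
      (∑ i ∈ range (M - n + 1), h (t * M + i)) / θ + ∑ i ∈ range M, σ (t * M + i) := by
    intro t
    have hpos : (0 : ℝ) ≤ ∑ i ∈ range (M - n + 1), h (t * M + i) :=
      Finset.sum_nonneg fun i _ => h0 _
    by_cases hbig : (∑ i ∈ range (M - n + 1), h (t * M + i)) ≤ θ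
    · have hQ := hcon (t * M) hbig
      have h2 : (0 : ℝ) ≤ (∑ i ∈ range (M - n + 1), h (t * M + i)) / θ :=
        div_nonneg hpos (le_of_lt hθpos)
      linarith
    · push_neg at hbig
      have h2 : (1 : ℝ) < (∑ i ∈ range (M - n + 1), h (t * M + i)) / θ := by
        rw [lt_div_iff₀ hθpos]
        simpa using hbig
      have h3 : (0 : ℝ) ≤ ∑ i ∈ range M, σ (t * M + i) :=
        Finset.sum_nonneg fun i _ => hσ0 _
      linarith
  have hsum : (K : ℝ) ≤ (∑ j ∈ range (K * M), h j) / θ + ∑ j ∈ range (K * M), σ j := by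
    have hstep := Finset.sum_le_sum (s := range K)
      (f := fun _ => (1 : ℝ))
      (g := fun t => (∑ i ∈ range (M - n + 1), h (t * M + i)) / θ + ∑ i ∈ range M, σ (t * M + i))
      (fun t _ => hper t)
    simp only [Finset.sum_const, card_range, nsmul_eq_mul, mul_one] at hstep
    rw [Finset.sum_add_distrib] at hstep
    have e1 : ∑ t ∈ range K, (∑ i ∈ range (M - n + 1), h (t * M + i)) / θ
        ≤ (∑ j ∈ range (K * M), h j) / θ := by
      rw [← Finset.sum_div]
      gcongr
      rw [sum_range_mul_split h K M]
      apply Finset.sum_le_sum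
      intro t _
      apply Finset.sum_le_sum_of_subset_of_nonneg
      · apply Finset.range_subset_range.2
        omega
      · intro i _ _
        exact h0 _
    have e2 : ∑ t ∈ range K, ∑ i ∈ range M, σ (t * M + i) = ∑ j ∈ range (K * M), σ j :=
      (sum_range_mul_split σ K M).symm
    rw [e2] at hstep
    linarith
  set a : ℝ := ∑ j ∈ range (K * M), h j with ha
  set b : ℝ := ∑ j ∈ range (K * M), σ j with hb
  have hsum2 : ((K : ℝ) - b) * θ ≤ a := by
    have hd : (K : ℝ) - b ≤ a / θ := by linarith
    exact (le_div_iff₀ hθpos).1 hd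
  have hnr1 : (1 : ℝ) ≤ (n : ℝ) := by exact_mod_cast hn
  have hθval : θ = (7 * (n : ℝ) + 1) / 4 := by
    rw [hθ, hMn]
    push_cast
    ring
  have haval : a ≤ (K : ℝ) * (n : ℝ) := by
    have hMr2 : ((M : ℕ) : ℝ) = 8 * (n : ℝ) := by
      rw [hM]
      push_cast
      ring
    calc a ≤ (K : ℝ) * (M : ℝ) / 8 := hhsum
      _ = (K : ℝ) * (n : ℝ) := by rw [hMr2]; ring
  rw [hθval] at hsum2
  have hKn : (0 : ℝ) < (K : ℝ) * (n : ℝ) := by positivity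
  nlinarith [hsum2, hσsum, haval, hKn, hKpos,
    mul_nonneg (show (0 : ℝ) ≤ (K : ℝ) / 8 - b by linarith)
      (show (0 : ℝ) ≤ 7 * (n : ℝ) + 1 by linarith)]

/-- The uniform measure on the (periodic) orbit of `z` under the shift. -/
noncomputable def orbitMeasure (z : ℕ → A) (p : ℕ) : Measure (ℕ → A) :=
  ((p : ℝ≥0∞))⁻¹ • ∑ s ∈ Finset.range p, Measure.dirac (shifted s z)

lemma orbit_apply (z : ℕ → A) (p : ℕ) (S : Set (ℕ → A)) :
    orbitMeasure z p S
      = (p : ℝ≥0∞)⁻¹ * ∑ s ∈ range p, (Measure.dirac (shifted s z)) S := by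
  rw [orbitMeasure, Measure.smul_apply, smul_eq_mul]
  congr 1
  rw [Measure.coe_finset_sum]
  simp

lemma orbit_prob (z : ℕ → A) (p : ℕ) (hp : 0 < p) :
    IsProbabilityMeasure (orbitMeasure z p) := by
  constructor
  rw [orbit_apply]
  have h1 : ∀ s : ℕ, (Measure.dirac (shifted s z)) Set.univ = 1 := fun s => by simp
  rw [Finset.sum_congr rfl fun s _ => h1 s]
  rw [Finset.sum_const, card_range, nsmul_eq_mul, mul_one]
  exact ENNReal.inv_mul_cancel (Nat.cast_ne_zero.2 (by omega)) (ENNReal.natCast_ne_top p)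

lemma map_finset_sum {ι : Type*} (I : Finset ι) (μ : ι → Measure (ℕ → A))
    {f : (ℕ → A) → (ℕ → A)} (hf : Measurable f) :
    (∑ i ∈ I, μ i).map f = ∑ i ∈ I, (μ i).map f := by
  classical
  induction I using Finset.induction_on with
  | empty => simp
  | insert _ _ h ih =>
    rw [Finset.sum_insert h, Measure.map_add _ _ hf, ih, Finset.sum_insert h]

lemma shifted_period {z : ℕ → A} {p : ℕ} (hper : ∀ t, z (t + p) = z t) :
    shifted p z = z := by
  funext t
  show z (p + t) = z t
  rw [Nat.add_comm]
  exact hper t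

lemma orbit_stationary (z : ℕ → A) (p : ℕ) (hper : ∀ t, z (t + p) = z t) :
    Stationary (orbitMeasure z p) := by
  show Measure.map shift (orbitMeasure z p) = orbitMeasure z p
  rw [orbitMeasure, Measure.map_smul, map_finset_sum _ _ measurable_shift]
  have h1 : ∀ s : ℕ, (Measure.dirac (shifted s z)).map shift
      = Measure.dirac (shifted (s + 1) z) := fun s => by
    rw [Measure.map_dirac' measurable_shift, shift_shifted]
  rw [Finset.sum_congr rfl fun s _ => h1 s]
  congr 1
  ext S hS
  rw [Measure.coe_finset_sum, Measure.coe_finset_sum, Finset.sum_apply, Finset.sum_apply]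
  apply sum_range_rotate_ennreal (v := fun s => (Measure.dirac (shifted s z)) S)
  · have : shifted p z = shifted 0 z := by
      rw [shifted_period hper, shifted_zero]
    rw [this]
  · exact measure_ne_top _ _

open Classical in
/-- Convergence of word frequencies along a `p`-periodic sequence. -/
lemma periodic_freq {z : ℕ → A} {p : ℕ} (hp : 0 < p) (hper : ∀ t, z (t + p) = z t)
    {k : ℕ} (B : Fin k → A) :
    Tendsto (fun m => freqWord B m z) atTop
      (𝓝 ((∑ r ∈ range p, if (∀ j : Fin k, z (r + j) = B j) then (1 : ℝ) else 0) / p)) := by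
  set u : ℕ → ℝ := fun i => if (∀ j : Fin k, z (i + j) = B j) then (1 : ℝ) else 0 with hu
  have hcond : ∀ t : ℕ, (∀ j : Fin k, z (t + p + j) = B j) ↔ (∀ j : Fin k, z (t + j) = B j) := by
    intro t
    apply forall_congr'
    intro j
    have : z (t + p + j) = z (t + j) := by
      rw [show t + p + (j : ℕ) = t + j + p by omega]
      exact hper (t + j)
    rw [this]
  have huper : ∀ t, u (t + p) = u t := fun t => if_congr (hcond t) rfl rfl
  have hu0 : ∀ i, 0 ≤ u i := fun i => by rw [hu]; dsimp only; split <;> norm_num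
  have hu1 : ∀ i, u i ≤ 1 := fun i => by rw [hu]; dsimp only; split <;> norm_num
  set C : ℝ := ∑ r ∈ range p, u r with hC
  have hppos : (0 : ℝ) < p := by exact_mod_cast hp
  have hC0 : 0 ≤ C := Finset.sum_nonneg fun r _ => hu0 r
  have hCp : C ≤ p := by
    calc C ≤ ∑ _r ∈ range p, (1 : ℝ) := Finset.sum_le_sum fun r _ => hu1 r
      _ = p := by simp
  -- uniform bound on partial sums
  have hkey : ∀ Q : ℕ, |(∑ i ∈ range Q, u i) - Q * (C / p)| ≤ p := by
    intro Q
    obtain ⟨q, r, hr, hQ⟩ : ∃ q r, r < p ∧ Q = q * p + r :=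
      ⟨Q / p, Q % p, Nat.mod_lt _ hp, by rw [Nat.div_add_mod' Q p]⟩
    subst hQ
    rw [Finset.sum_range_add, sum_range_mul_periodic huper q]
    have hR0 : 0 ≤ ∑ i ∈ range r, u (q * p + i) :=
      Finset.sum_nonneg fun i _ => hu0 _
    have hRr : ∑ i ∈ range r, u (q * p + i) ≤ r := by
      calc ∑ i ∈ range r, u (q * p + i) ≤ ∑ _i ∈ range r, (1 : ℝ) :=
            Finset.sum_le_sum fun i _ => hu1 _
        _ = r := by simp
    have hrp : (r : ℝ) ≤ p := by
      exact_mod_cast le_of_lt hr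
    have hcast : ((q * p + r : ℕ) : ℝ) = (q : ℝ) * p + r := by push_cast; ring
    rw [hcast]
    have hexp : ((q : ℝ) * p + r) * (C / p) = q * C + r * (C / p) := by
      field_simp
    rw [hexp]
    have hrCp0 : 0 ≤ (r : ℝ) * (C / p) := by positivity
    have hrCp : (r : ℝ) * (C / p) ≤ p := by
      have h5 : C / p ≤ 1 := by
        rw [div_le_one hppos]
        exact hCp
      calc (r : ℝ) * (C / p) ≤ (p : ℝ) * 1 := by
            apply mul_le_mul hrp h5 (by positivity) (by positivity)
        _ = p := by ring
    rw [abs_le]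
    constructor <;> [linarith; linarith]
  -- conclude
  have hsub : Tendsto (fun m => freqWord B m z - C / p) atTop (𝓝 0) := by
    have hbnd : ∀ᶠ m : ℕ in atTop,
        ‖freqWord B m z - C / p‖ ≤ (p : ℝ) / ((m : ℝ) - k + 1) := by
      filter_upwards [eventually_ge_atTop (k + 1)] with m hm
      have hkm : k ≤ m := by omega
      have hQ : ((m - k + 1 : ℕ) : ℝ) = (m : ℝ) - k + 1 := by
        have he : m - k + 1 = m + 1 - k := by omega
        rw [he, Nat.cast_sub (by omega)]
        push_cast
        ring
      have hD : (0 : ℝ) < (m : ℝ) - k + 1 := by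
        rw [← hQ]
        have : 0 < m - k + 1 := by omega
        exact_mod_cast this
      rw [freqWord, if_pos hkm]
      rw [Real.norm_eq_abs]
      have hsum_eq : (∑ i ∈ range (m - k + 1),
            if (∀ j : Fin k, z (i + j) = B j) then (1 : ℝ) else 0)
          = ∑ i ∈ range (m - k + 1), u i := rfl
      rw [hsum_eq]
      set X : ℝ := ∑ i ∈ range (m - k + 1), u i with hX
      have hdiv : X / ((m : ℝ) - k + 1) - C / p
          = (X - ((m - k + 1 : ℕ) : ℝ) * (C / p)) / ((m : ℝ) - k + 1) := by
        rw [hQ, sub_div, mul_div_cancel_left₀ _ (ne_of_gt hD)]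
      rw [hdiv, abs_div, abs_of_pos hD, div_le_div_iff_of_pos_right hD]
      exact hkey (m - k + 1)
    have ha : Tendsto (fun m : ℕ => (p : ℝ) / ((m : ℝ) - k + 1)) atTop (𝓝 0) := by
      apply Tendsto.div_atTop (tendsto_const_nhds)
      have h6 : Tendsto (fun m : ℕ => (m : ℝ)) atTop atTop := tendsto_natCast_atTop_atTop
      have h7 := tendsto_atTop_add_const_right atTop (-(k : ℝ) + 1) h6
      apply h7.congr
      intro m
      ring
    exact squeeze_zero_norm' hbnd ha
  have := hsub.add (tendsto_const_nhds (x := C / p))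
  rw [zero_add] at this
  apply this.congr
  intro m
  ring

open Classical in
lemma orbit_ergodic (z : ℕ → A) (p : ℕ) (hp : 0 < p) (hper : ∀ t, z (t + p) = z t)
    (hsing : ∀ t, SingAtom (z t)) :
    ErgodicProc (orbitMeasure z p) := by
  intro k B
  set C : ℝ := ∑ r ∈ range p, if (∀ j : Fin k, z (r + j) = B j) then (1 : ℝ) else 0 with hC
  refine ⟨C / p, ?_⟩
  -- every orbit point satisfies the convergence
  have horb : ∀ s : ℕ, Tendsto (fun m => freqWord B m (shifted s z)) atTop (𝓝 (C / p)) := by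
    intro s
    have hper' : ∀ t, shifted s z (t + p) = shifted s z t := by
      intro t
      show z (s + (t + p)) = z (s + t)
      rw [show s + (t + p) = s + t + p by omega]
      exact hper (s + t)
    have := periodic_freq (z := shifted s z) hp hper' B
    have hCeq : (∑ r ∈ range p, if (∀ j : Fin k, shifted s z (r + j) = B j) then (1 : ℝ) else 0)
        = C := by
      rw [hC]
      have hstep : ∀ r : ℕ, (if (∀ j : Fin k, shifted s z (r + j) = B j) then (1 : ℝ) else 0)
          = (fun t => if (∀ j : Fin k, z (t + j) = B j) then (1 : ℝ) else 0) (s + r) := by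
        intro r
        apply if_congr _ rfl rfl
        apply forall_congr'
        intro j
        show z (s + (r + j)) = B j ↔ z (s + r + j) = B j
        rw [show s + (r + (j : ℕ)) = s + r + j by omega]
      rw [Finset.sum_congr rfl fun r _ => hstep r]
      refine periodic_sum_shift
        (u := fun t => if (∀ j : Fin k, z (t + (j : ℕ)) = B j) then (1 : ℝ) else 0) ?_ s
      intro t
      apply if_congr _ rfl rfl
      apply forall_congr'
      intro j
      rw [show t + p + (j : ℕ) = t + j + p by omega, hper (t + j)]
    rw [hCeq] at this
    exact this
  -- a.e. statement via the measurable singletons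
  rw [ae_iff]
  set Bad : Set (ℕ → A) := {x | ¬ Tendsto (fun m => freqWord B m x) atTop (𝓝 (C / p))}
    with hBad
  have hb : orbitMeasure z p Bad
      = (p : ℝ≥0∞)⁻¹ * ∑ s ∈ range p, (Measure.dirac (shifted s z)) Bad :=
    orbit_apply z p Bad
  have hzero : ∀ s : ℕ, (Measure.dirac (shifted s z)) Bad = 0 := by
    intro s
    have hsing' : ∀ t, SingAtom (shifted s z t) := fun t => hsing (s + t)
    have hsm : MeasurableSet ({shifted s z} : Set (ℕ → A)) :=
      measurableSet_singleton_of_sing hsing'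
    have hsub : Bad ⊆ ({shifted s z} : Set (ℕ → A))ᶜ := by
      intro x hxB
      intro hxs
      rw [Set.mem_singleton_iff] at hxs
      subst hxs
      exact hxB (horb s)
    apply measure_mono_null hsub
    rw [Measure.dirac_apply' _ hsm.compl]
    simp
  rw [hb, Finset.sum_congr rfl fun s _ => hzero s]
  simp

/-- There is no uniformly consistent test for a hypothesis `H₀ ⊆ E`
against its complement `E ∖ H₀` unless one of the two is empty. -/
theorem no_uniform_test_against_complement (H₀ : Set (Measure (ℕ → A)))
    (hsub : H₀ ⊆ ergSet A) (hmeas : MeasurableSet H₀)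
    (hne₀ : H₀.Nonempty) (hne₁ : (ergSet A \ H₀).Nonempty) :
    ¬ ∃ φ : ℕ → (ℕ → A) → Bool,
        (∀ n, Measurable (φ n)) ∧ FinHorizon φ ∧
        UnifConsistent φ H₀ (ergSet A \ H₀) := by
  classical
  rintro ⟨φ, hφm, hφfin, hφcons⟩
  obtain ⟨ρ₀, hρ₀H⟩ := hne₀
  obtain ⟨ρ₁, hρ₁H⟩ := hne₁
  have hρ₀E : StatErg ρ₀ := hsub hρ₀H
  have hρ₁E : StatErg ρ₁ := hρ₁H.1
  haveI hρ₀P : IsProbabilityMeasure ρ₀ := hρ₀E.1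
  haveI hρ₁P : IsProbabilityMeasure ρ₁ := hρ₁E.1
  -- the alphabet is nonempty
  have hAne : Nonempty A := by
    by_contra hA
    have hIE : IsEmpty A := not_nonempty_iff.1 hA
    have h1 : ρ₀ (Set.univ : Set (ℕ → A)) = 1 := measure_univ
    have h2 : (Set.univ : Set (ℕ → A)) = ∅ := by
      rw [Set.univ_eq_empty_iff]
      exact ⟨fun f => hIE.false (f 0)⟩
    rw [h2, measure_empty] at h1
    exact zero_ne_one h1
  -- fix the error level and the sample size
  obtain ⟨N₀, hN₀⟩ := hφcons (1 / 8) (by norm_num)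
  obtain ⟨n, hn_def⟩ : ∃ n : ℕ, n = N₀ + 1 := ⟨N₀ + 1, rfl⟩
  have hn1 : 1 ≤ n := by omega
  obtain ⟨herr₀, herr₁⟩ := hN₀ n (by omega)
  set g : (ℕ → A) → Bool := φ n with hgdef
  have hg : Measurable g := hφm n
  have hgfin : ∀ x y : ℕ → A, (∀ i < n, x i = y i) → g x = g y := fun x y h => hφfin n x y h
  have hs₀ : MeasurableSet {x : ℕ → A | g x = true} := hg (MeasurableSet.singleton true)
  have hs₀' : MeasurableSet {x : ℕ → A | g x = false} := hg (MeasurableSet.singleton false)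
  -- limits of window averages under ρ₀ and ρ₁
  obtain ⟨c₀, hc₀val, hc₀ae⟩ := key_convergence hρ₀E g n hn1 hg hgfin
  obtain ⟨c₁, hc₁val, hc₁ae⟩ := key_convergence hρ₁E g n hn1 hg hgfin
  have hc₀lt : c₀ < 1 / 8 := by
    have herr := herr₀ ρ₀ hρ₀H
    rw [hc₀val]
    exact (ENNReal.lt_ofReal_iff_toReal_lt (measure_ne_top _ _)).1 herr
  have hc₁gt : 1 - c₁ < 1 / 8 := by
    have herr := herr₁ ρ₁ hρ₁H
    have hcompl : {x : ℕ → A | g x = false} = {x : ℕ → A | g x = true}ᶜ := by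
      ext x
      simp [Set.mem_compl_iff, Set.mem_setOf_eq]
    rw [hcompl, measure_compl hs₀ (measure_ne_top _ _), measure_univ] at herr
    have h3 := (ENNReal.lt_ofReal_iff_toReal_lt (by
      exact ne_top_of_le_ne_top ENNReal.one_ne_top tsub_le_self)).1 herr
    rw [ENNReal.toReal_sub_of_le prob_le_one ENNReal.one_ne_top] at h3
    simpa [hc₁val] using h3
  -- typical points
  have hblob₀ := blob_density hρ₀E
  have hblob₁ := blob_density hρ₁E
  obtain ⟨x₀, hx₀avg, hx₀blob⟩ := (hc₀ae.and hblob₀).exists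
  obtain ⟨x₁, hx₁avg, hx₁blob⟩ := (hc₁ae.and hblob₁).exists
  -- select good windows
  set M : ℕ := 8 * n with hMdef
  have hσ0 : ∀ (x : ℕ → A) (j : ℕ), (0 : ℝ) ≤ if SingAtom (x j) then (0 : ℝ) else 1 := by
    intro x j
    split <;> norm_num
  obtain ⟨T₀, hT₀avg, hT₀blob⟩ :=
    window_select (h := fun j => fI g (shifted j x₀))
      (σ := fun j => if SingAtom (x₀ j) then (0 : ℝ) else 1)
      (fun j => fI_nonneg g _) (fun j => fI_le_one g _) (hσ0 x₀) hc₀lt hx₀avg hx₀blob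
      hn1 hMdef
  have hT₀sing : ∀ i < M, SingAtom (x₀ (T₀ + i)) := by
    intro i hi
    by_contra hbad
    have h5 : (1 : ℝ) ≤ ∑ i ∈ Finset.range M, if SingAtom (x₀ (T₀ + i)) then (0 : ℝ) else 1 := by
      have h6 := Finset.single_le_sum
        (f := fun i => if SingAtom (x₀ (T₀ + i)) then (0 : ℝ) else 1)
        (fun i _ => hσ0 x₀ (T₀ + i)) (Finset.mem_range.2 hi)
      simpa [hbad] using h6
    linarith
  -- window for ρ₁ using the complementary test
  have hS1 : Tendsto (fun m => (∑ j ∈ Finset.range m, (1 - fI g (shifted j x₁))) / (m : ℝ))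
      atTop (𝓝 (1 - c₁)) := by
    have hbase : Tendsto (fun m => 1 - (∑ j ∈ Finset.range m, fI g (shifted j x₁)) / (m : ℝ))
        atTop (𝓝 (1 - c₁)) := tendsto_const_nhds.sub hx₁avg
    apply hbase.congr'
    filter_upwards [eventually_ge_atTop 1] with m hm
    have hm0 : ((m : ℝ)) ≠ 0 := Nat.cast_ne_zero.2 (by omega)
    rw [Finset.sum_sub_distrib, Finset.sum_const, Finset.card_range, nsmul_eq_mul, mul_one,
      sub_div, div_self hm0]
  obtain ⟨T₁, hT₁avg, hT₁blob⟩ :=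
    window_select (h := fun j => 1 - fI g (shifted j x₁))
      (σ := fun j => if SingAtom (x₁ j) then (0 : ℝ) else 1)
      (fun j => by
        show (0 : ℝ) ≤ 1 - fI g (shifted j x₁)
        have := fI_le_one g (shifted j x₁)
        linarith)
      (fun j => by
        show 1 - fI g (shifted j x₁) ≤ 1
        have := fI_nonneg g (shifted j x₁)
        linarith)
      (hσ0 x₁) hc₁gt hS1 hx₁blob hn1 hMdef
  have hT₁sing : ∀ i < M, SingAtom (x₁ (T₁ + i)) := by
    intro i hi
    by_contra hbad
    have h5 : (1 : ℝ) ≤ ∑ i ∈ Finset.range M, if SingAtom (x₁ (T₁ + i)) then (0 : ℝ) else 1 := by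
      have h6 := Finset.single_le_sum
        (f := fun i => if SingAtom (x₁ (T₁ + i)) then (0 : ℝ) else 1)
        (fun i _ => hσ0 x₁ (T₁ + i)) (Finset.mem_range.2 hi)
      simpa [hbad] using h6
    linarith
  set D : ℝ := ((M - n + 1 : ℕ) : ℝ) with hDdef
  have hT₁sum : (3 / 4) * D ≤ ∑ i ∈ Finset.range (M - n + 1), fI g (shifted (T₁ + i) x₁) := by
    have h6 : ∑ i ∈ Finset.range (M - n + 1), (1 - fI g (shifted (T₁ + i) x₁))
        = D - ∑ i ∈ Finset.range (M - n + 1), fI g (shifted (T₁ + i) x₁) := by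
      rw [Finset.sum_sub_distrib, Finset.sum_const, Finset.card_range, nsmul_eq_mul, mul_one, hDdef]
    rw [h6] at hT₁avg
    linarith
  -- the periodic splice
  obtain ⟨p, hp_def⟩ : ∃ p : ℕ, p = 2 * M := ⟨2 * M, rfl⟩
  have hMpos : 0 < M := by omega
  have hppos : 0 < p := by omega
  set z : ℕ → A := fun t =>
    if t % p < M then x₀ (T₀ + t % p) else x₁ (T₁ + (t % p - M)) with hzdef
  have hzper : ∀ t, z (t + p) = z t := by
    intro t
    show (if (t + p) % p < M then _ else _) = _
    rw [Nat.add_mod_right]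
  have hzsing : ∀ t, SingAtom (z t) := by
    intro t
    have hmod : t % p < p := Nat.mod_lt _ hppos
    by_cases hlt : t % p < M
    · show SingAtom (if t % p < M then x₀ (T₀ + t % p) else x₁ (T₁ + (t % p - M)))
      rw [if_pos hlt]
      exact hT₀sing _ hlt
    · show SingAtom (if t % p < M then x₀ (T₀ + t % p) else x₁ (T₁ + (t % p - M)))
      rw [if_neg hlt]
      exact hT₁sing _ (by omega)
  set μ : Measure (ℕ → A) := orbitMeasure z p with hμdef
  haveI hμprob : IsProbabilityMeasure μ := orbit_prob z p hppos
  have hμstat : Stationary μ := orbit_stationary z p hzper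
  have hμerg : ErgodicProc μ := orbit_ergodic z p hppos hzper hzsing
  have hμE : μ ∈ ergSet A := ⟨hμprob, hμstat, hμerg⟩
  -- the values of z on windows
  have hzval : ∀ t, t < p → z t = if t < M then x₀ (T₀ + t) else x₁ (T₁ + (t - M)) := by
    intro t ht
    show (if t % p < M then x₀ (T₀ + t % p) else x₁ (T₁ + (t % p - M))) = _
    rw [Nat.mod_eq_of_lt ht]
  have hagree₀ : ∀ s, s + n ≤ M → fI g (shifted s z) = fI g (shifted (T₀ + s) x₀) := by
    intro s hs
    have hgeq : g (shifted s z) = g (shifted (T₀ + s) x₀) := by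
      apply hgfin
      intro i hi
      show z (s + i) = x₀ (T₀ + s + i)
      rw [hzval (s + i) (by omega), if_pos (by omega : s + i < M)]
      congr 1
      omega
    rw [fI, fI, hgeq]
  have hagree₁ : ∀ i, i + n ≤ M → fI g (shifted (M + i) z) = fI g (shifted (T₁ + i) x₁) := by
    intro i hineq
    have hgeq : g (shifted (M + i) z) = g (shifted (T₁ + i) x₁) := by
      apply hgfin
      intro j hj
      show z (M + i + j) = x₁ (T₁ + i + j)
      rw [hzval (M + i + j) (by omega), if_neg (by omega : ¬ (M + i + j < M))]
      congr 1
      omega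
    rw [fI, fI, hgeq]
  -- bounds on the orbit count
  set S : ℝ := ∑ s ∈ Finset.range p, fI g (shifted s z) with hSdef
  have hsplit : S = ∑ s ∈ Finset.range M, fI g (shifted s z)
      + ∑ i ∈ Finset.range M, fI g (shifted (M + i) z) := by
    rw [hSdef, hp_def, show 2 * M = M + M from by omega, Finset.sum_range_add]
  have hDle : D ≤ (M : ℝ) := by
    rw [hDdef]
    have : M - n + 1 ≤ M := by omega
    exact_mod_cast this
  have hD0 : 0 < D := by
    rw [hDdef]
    have : 0 < M - n + 1 := by omega
    exact_mod_cast this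
  have hSlow : (3 / 4) * D ≤ S := by
    rw [hsplit]
    have h1 : (0 : ℝ) ≤ ∑ s ∈ Finset.range M, fI g (shifted s z) :=
      Finset.sum_nonneg fun s _ => fI_nonneg g _
    have h2 : ∑ i ∈ Finset.range (M - n + 1), fI g (shifted (M + i) z)
        ≤ ∑ i ∈ Finset.range M, fI g (shifted (M + i) z) := by
      apply Finset.sum_le_sum_of_subset_of_nonneg
      · exact Finset.range_subset_range.2 (by omega)
      · intro i _ _
        exact fI_nonneg g _
    have h3 : ∑ i ∈ Finset.range (M - n + 1), fI g (shifted (M + i) z)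
        = ∑ i ∈ Finset.range (M - n + 1), fI g (shifted (T₁ + i) x₁) := by
      apply Finset.sum_congr rfl
      intro i hi
      exact hagree₁ i (by
        have := Finset.mem_range.1 hi
        omega)
    rw [← h3] at hT₁sum
    linarith
  have hSup : S ≤ D / 4 + ((n : ℝ) - 1) + (M : ℝ) := by
    rw [hsplit]
    have h2 : ∑ i ∈ Finset.range M, fI g (shifted (M + i) z) ≤ (M : ℝ) := by
      calc ∑ i ∈ Finset.range M, fI g (shifted (M + i) z)
          ≤ ∑ _i ∈ Finset.range M, (1 : ℝ) := Finset.sum_le_sum fun i _ => fI_le_one g _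
        _ = (M : ℝ) := by simp
    have h1 : ∑ s ∈ Finset.range M, fI g (shifted s z) ≤ D / 4 + ((n : ℝ) - 1) := by
      rw [show M = (M - n + 1) + (n - 1) from by omega, Finset.sum_range_add]
      have h1a : ∑ s ∈ Finset.range (M - n + 1), fI g (shifted s z)
          = ∑ s ∈ Finset.range (M - n + 1), fI g (shifted (T₀ + s) x₀) := by
        apply Finset.sum_congr rfl
        intro s hs
        exact hagree₀ s (by
          have := Finset.mem_range.1 hs
          omega)
      have h1b : ∑ i ∈ Finset.range (n - 1), fI g (shifted (M - n + 1 + i) z) ≤ ((n : ℝ) - 1) := by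
        calc ∑ i ∈ Finset.range (n - 1), fI g (shifted (M - n + 1 + i) z)
            ≤ ∑ _i ∈ Finset.range (n - 1), (1 : ℝ) := Finset.sum_le_sum fun i _ => fI_le_one g _
          _ = ((n - 1 : ℕ) : ℝ) := by simp
          _ = (n : ℝ) - 1 := by
              rw [Nat.cast_sub hn1]
              simp
      rw [h1a]
      linarith [hT₀avg, h1b]
    linarith
  -- counting formula for the orbit measure
  have hcnt : ∀ (b : Bool), μ {x | g x = b}
      = (p : ℝ≥0∞)⁻¹ * ((((Finset.range p).filter fun s => g (shifted s z) = b).card : ℝ≥0∞)) := by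
    intro b
    have hsb : MeasurableSet {x : ℕ → A | g x = b} := hg (MeasurableSet.singleton b)
    rw [hμdef, orbit_apply]
    congr 1
    have hterm : ∀ s : ℕ, (Measure.dirac (shifted s z)) {x : ℕ → A | g x = b}
        = if g (shifted s z) = b then (1 : ℝ≥0∞) else 0 := by
      intro s
      rw [Measure.dirac_apply' _ hsb]
      by_cases hgs : g (shifted s z) = b
      · have hmem : shifted s z ∈ {x : ℕ → A | g x = b} := hgs
        rw [if_pos hgs, Set.indicator_of_mem hmem]
        rfl
      · have hmem : shifted s z ∉ {x : ℕ → A | g x = b} := hgs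
        rw [if_neg hgs]
        exact Set.indicator_of_notMem hmem _
    rw [Finset.sum_congr rfl fun s _ => hterm s]
    rw [Finset.sum_boole]
  -- cardinalities
  set CntN : ℕ := ((Finset.range p).filter fun s => g (shifted s z) = true).card with hCntN
  set CntF : ℕ := ((Finset.range p).filter fun s => g (shifted s z) = false).card with hCntF
  have hCntsum : CntN + CntF = p := by
    rw [hCntN, hCntF]
    have h8 : ((Finset.range p).filter fun s => g (shifted s z) = false)
        = (Finset.range p).filter fun s => ¬ (g (shifted s z) = true) := by
      apply Finset.filter_congr
      intro s _
      simp
    rw [h8, Finset.card_filter_add_card_filter_not, Finset.card_range]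
  have hCntNR : (CntN : ℝ) = S := by
    rw [hSdef, hCntN]
    rw [Finset.sum_congr rfl fun s _ =>
      show fI g (shifted s z) = if g (shifted s z) = true then (1 : ℝ) else 0 from rfl]
    rw [Finset.sum_boole]
  -- translating the measure bound to a count bound
  have hbound : ∀ (b : Bool), μ {x | g x = b} < ENNReal.ofReal (1 / 8) →
      ((((Finset.range p).filter fun s => g (shifted s z) = b).card : ℝ)) < (p : ℝ) / 8 := by
    intro b hlt
    rw [hcnt b] at hlt
    set Cb : ℕ := ((Finset.range p).filter fun s => g (shifted s z) = b).card
    have hpne0 : (p : ℝ≥0∞) ≠ 0 := Nat.cast_ne_zero.2 (by omega)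
    have hpnetop : (p : ℝ≥0∞) ≠ ⊤ := ENNReal.natCast_ne_top p
    have h9 : (Cb : ℝ≥0∞) < (p : ℝ≥0∞) * ENNReal.ofReal (1 / 8) := by
      calc (Cb : ℝ≥0∞) = (p : ℝ≥0∞) * ((p : ℝ≥0∞)⁻¹ * (Cb : ℝ≥0∞)) := by
            rw [← mul_assoc, ENNReal.mul_inv_cancel hpne0 hpnetop, one_mul]
        _ < (p : ℝ≥0∞) * ENNReal.ofReal (1 / 8) := by
            exact (ENNReal.mul_lt_mul_iff_right hpne0 hpnetop).2 hlt
    have h10 : (p : ℝ≥0∞) * ENNReal.ofReal (1 / 8) = ENNReal.ofReal ((p : ℝ) / 8) := by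
      rw [← ENNReal.ofReal_natCast p, ← ENNReal.ofReal_mul (by positivity)]
      congr 1
      ring
    rw [h10] at h9
    have h11 := (ENNReal.lt_ofReal_iff_toReal_lt (ENNReal.natCast_ne_top Cb)).1 h9
    simpa using h11
  -- numeric facts
  have hnR : (1 : ℝ) ≤ (n : ℝ) := by exact_mod_cast hn1
  have hDval : D = 7 * (n : ℝ) + 1 := by
    rw [hDdef, show M - n + 1 = 7 * n + 1 from by omega]
    push_cast
    ring
  have hpR : ((p : ℕ) : ℝ) = 16 * (n : ℝ) := by
    rw [hp_def, hMdef]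
    push_cast
    ring
  have hMR : ((M : ℕ) : ℝ) = 8 * (n : ℝ) := by
    rw [hMdef]
    push_cast
    ring
  -- final case analysis
  by_cases hμH : μ ∈ H₀
  · have hlt := herr₀ μ hμH
    have h12 := hbound true hlt
    rw [← hCntN] at h12
    rw [hCntNR] at h12
    rw [hpR] at h12
    rw [hDval] at hSlow
    linarith
  · have hμmem : μ ∈ ergSet A \ H₀ := ⟨hμE, hμH⟩
    have hlt := herr₁ μ hμmem
    have h12 := hbound false hlt
    rw [← hCntF] at h12
    have hCntFR : (CntF : ℝ) = (p : ℝ) - S := by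
      have : (CntN : ℝ) + (CntF : ℝ) = (p : ℝ) := by exact_mod_cast hCntsum
      rw [hCntNR] at this
      linarith
    rw [hCntFR, hpR] at h12
    rw [hDval] at hSup
    rw [hMR] at hSup
    linarith

end Aux

end Paper
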